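/- arXiv:2503.14441 — 5 statements merged into one kernel-verified Lean document; each statement's English description precedes it below -/
import Mathlib

section
/- Let N and M be unimodular integral lattices and φ : N ⊕ M(2) → N(2) ⊕ M the map n ⊕ m ↦ n ⊕ 2m. The image of φ is exactly the set of elements of N(2) ⊕ M of even divisibility, i.e., elements v with (v, w) even for all w ∈ N(2) ⊕ M. -/
/-!
The `N`-component of `(v, w)` is `2 * bN v.1 w.1`, always even, so `v` has even divisibility
iff `bM v.2 w` is even for every `w : M`. Then `w ↦ bM v.2 w / 2` is a linear functional on `M`,
which by unimodularity of `M` equals `bM m` for some `m`, and injectivity gives `v.2 = 2 • m`.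
-/

section

variable {M : Type*} [AddCommGroup M] [Module ℤ M]

def LinearMap.divOfForallDvd (f : M →ₗ[ℤ] ℤ) (n : ℤ) (h : ∀ x, n ∣ f x) : M →ₗ[ℤ] ℤ where
  toFun x := f x / n
  map_add' x y := by rw [map_add, Int.add_ediv_of_dvd_right (h y)]
  map_smul' c x := by rw [f.map_smul, smul_eq_mul, Int.mul_ediv_assoc c (h x)]; rfl

theorem LinearMap.smul_divOfForallDvd (f : M →ₗ[ℤ] ℤ) (n : ℤ) (h : ∀ x, n ∣ f x) :
    n • f.divOfForallDvd n h = f :=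
  LinearMap.ext fun x => Int.mul_ediv_cancel' (h x)

theorem LinearMap.BilinForm.exists_eq_smul_of_forall_dvd {b : LinearMap.BilinForm ℤ M}
    (hb : Function.Bijective fun x => b x) {n : ℤ} {v : M} (hv : ∀ w, n ∣ b v w) :
    ∃ m, v = n • m := by
  obtain ⟨m, hm⟩ := hb.2 ((b v).divOfForallDvd n hv)
  refine ⟨m, hb.1 ?_⟩
  change b v = b (n • m)
  rw [map_zsmul, show b m = _ from hm, LinearMap.smul_divOfForallDvd]

end

theorem twist_map_range_eq_even_divisibility_general
    (N M : Type*) [AddCommGroup N] [Module ℤ N] [AddCommGroup M] [Module ℤ M]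
    (bN : LinearMap.BilinForm ℤ N) (bM : LinearMap.BilinForm ℤ M)
    (hMuni : Function.Bijective fun x => bM x) :
    {v : N × M | ∀ w : N × M, Even (2 * bN v.1 w.1 + bM v.2 w.2)}
      = Set.range (fun p : N × M => (p.1, (2 : ℤ) • p.2)) := by
  ext ⟨x, y⟩
  simp only [Set.mem_ofPred_eq, Set.mem_range, Prod.mk.injEq, Prod.exists]
  constructor
  · intro hv
    have hy : ∀ w, 2 ∣ bM y w := fun w => by simpa using (hv (0, w)).two_dvd
    obtain ⟨m, rfl⟩ := LinearMap.BilinForm.exists_eq_smul_of_forall_dvd hMuni hy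
    exact ⟨x, m, rfl, rfl⟩
  · rintro ⟨x, m, rfl, rfl⟩ w
    exact ⟨bN x w.1 + bM m w.2, by simp only [map_zsmul, LinearMap.smul_apply, smul_eq_mul]; ring⟩

/-- **Image of the twist map.** Let `N`, `M` be unimodular integral lattices and
`φ : N ⊕ M(2) → N(2) ⊕ M`, `n ⊕ m ↦ n ⊕ 2m`.  The image of `φ` is exactly the set of
elements of `N(2) ⊕ M` of even divisibility, i.e. those `v` with
`(v, w)_{N(2)⊕M} = 2 * bN v.1 w.1 + bM v.2 w.2` even for all `w`. -/
theorem twist_map_range_eq_even_divisibility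
    (N M : Type*) [AddCommGroup N] [Module ℤ N] [AddCommGroup M] [Module ℤ M]
    [Module.Free ℤ N] [Module.Finite ℤ N] [Module.Free ℤ M] [Module.Finite ℤ M]
    (bN : LinearMap.BilinForm ℤ N) (bM : LinearMap.BilinForm ℤ M)
    (hNsymm : ∀ x y, bN x y = bN y x) (hMsymm : ∀ x y, bM x y = bM y x)
    (hNuni : Function.Bijective fun x => bN x)
    (hMuni : Function.Bijective fun x => bM x) :
    {v : N × M | ∀ w : N × M, Even (2 * bN v.1 w.1 + bM v.2 w.2)}
      = Set.range (fun p : N × M => (p.1, (2 : ℤ) • p.2)) :=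
  twist_map_range_eq_even_divisibility_general N M bN bM hMuni
end

section
/- Let N and M be unimodular integral lattices and φ : N ⊕ M(2) → N(2) ⊕ M the map n ⊕ m ↦ n ⊕ 2m. Then the map Φ : O(N(2) ⊕ M) → O(N ⊕ M(2)) defined by f ↦ φ⁻¹ ∘ f ∘ φ is a well-defined group isomorphism. -/
/-- The group of isometries of a `ℤ`-valued pairing `b` on `L`, as a subgroup of
the group of `ℤ`-linear automorphisms of `L`. -/
def isomGroup {L : Type*} [AddCommGroup L] [Module ℤ L] (b : L → L → ℤ) :
    Subgroup (L ≃ₗ[ℤ] L) where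
  carrier := {f | ∀ x y, b (f x) (f y) = b x y}
  one_mem' := by intro x y; rfl
  mul_mem' := by
    intro f g hf hg x y
    have : ∀ z, (f * g) z = f (g z) := fun z => rfl
    rw [this, this, hf, hg]
  inv_mem' := by
    intro f hf x y
    have h1 : b x y = b (f (f⁻¹ x)) (f (f⁻¹ y)) := by
      rw [show f (f⁻¹ x) = x from f.apply_symm_apply x,
        show f (f⁻¹ y) = y from f.apply_symm_apply y]
    rw [h1, hf]

/-!
The twist `φ = smulSnd 2 : (n, m) ↦ (n, 2m)` and `ψ = smulFst 2 : (n, m) ↦ (2n, m)` both double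
the forms (`φ` from `N ⊕ M(2)` to `N(2) ⊕ M`, `ψ` back), and `ψ ∘ φ = φ ∘ ψ = 2`. Since `M` is
unimodular, the image of `φ` is exactly the set of vectors of `N(2) ⊕ M` pairing evenly with
everything, a set every isometry preserves; so `φ⁻¹ ∘ f ∘ φ` is a well-defined isometry, and
symmetrically for `ψ`. As unimodular lattices are torsion-free, `ψ ∘ φ = 2` makes the two
conjugations mutually inverse.
-/

section Conjugation

variable {L L' : Type*} [AddCommGroup L] [Module ℤ L] [AddCommGroup L'] [Module ℤ L']
  {b : L → L → ℤ} {b' : L' → L' → ℤ}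

theorem dvd_apply_left_of_mem_isomGroup {f : L ≃ₗ[ℤ] L} (hf : f ∈ isomGroup b) {d : ℤ}
    {y : L} (hy : ∀ z, d ∣ b y z) (z : L) : d ∣ b (f y) z := by
  have h : b (f y) (f (f.symm z)) = b y (f.symm z) := hf y (f.symm z)
  rw [f.apply_symm_apply] at h
  exact h ▸ hy _

theorem exists_conj_monoidHom_isomGroup (φ : L →ₗ[ℤ] L') (hφ : Function.Injective φ) {d : ℤ}
    (hd : d ≠ 0) (hb : ∀ x y, b' (φ x) (φ y) = d * b x y)
    (hrange : ∀ y, y ∈ LinearMap.range φ ↔ ∀ z, d ∣ b' y z) :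
    ∃ Φ : isomGroup b' →* isomGroup b, ∀ f x, φ ((Φ f).1 x) = f.1 (φ x) := by
  have hmaps (f : isomGroup b') (x : L) : f.1 (φ x) ∈ LinearMap.range φ :=
    (hrange _).2 (dvd_apply_left_of_mem_isomGroup f.2 ((hrange _).1 ⟨x, rfl⟩))
  let conj (f : isomGroup b') : Module.End ℤ L :=
    (f.1.toLinearMap ∘ₗ φ).codRestrictOfInjective φ hφ (hmaps f)
  have hconj (f : isomGroup b') (x : L) : φ (conj f x) = f.1 (φ x) :=
    LinearMap.codRestrictOfInjective_comp_apply _ _ _ _ x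
  let conjHom : isomGroup b' →* Module.End ℤ L :=
    { toFun := conj
      map_one' := LinearMap.ext fun x => hφ (hconj 1 x)
      map_mul' := fun f g => LinearMap.ext fun x => hφ <| by
        rw [hconj, Module.End.mul_apply, hconj, hconj]; rfl }
  let Φ := (LinearMap.GeneralLinearGroup.generalLinearEquiv ℤ L).toMonoidHom.comp
    conjHom.toHomUnits
  have hΦ (f : isomGroup b') (x : L) : Φ f x = conj f x := rfl
  have hmem (f : isomGroup b') : Φ f ∈ isomGroup b := fun x y =>
    mul_left_cancel₀ hd <| by rw [← hb, ← hb, hΦ, hΦ, hconj, hconj]; exact f.2 _ _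
  exact ⟨Φ.codRestrict _ hmem, hconj⟩

theorem leftInverse_of_conj [IsAddTorsionFree L] {φ : L → L'} {ψ : L' → L} {d : ℤ} (hd : d ≠ 0)
    (hψφ : ∀ x, ψ (φ x) = d • x) {Φ : isomGroup b' → isomGroup b} {Ψ : isomGroup b → isomGroup b'}
    (hΦ : ∀ f x, φ ((Φ f).1 x) = f.1 (φ x)) (hΨ : ∀ g y, ψ ((Ψ g).1 y) = g.1 (ψ y)) :
    Function.LeftInverse Φ Ψ := fun g =>
  Subtype.ext <| LinearEquiv.ext fun x => zsmul_right_injective hd <|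
    calc d • (Φ (Ψ g)).1 x = ψ (φ ((Φ (Ψ g)).1 x)) := (hψφ _).symm
      _ = g.1 (d • x) := by rw [hΦ, hΨ, hψφ]
      _ = d • g.1 x := map_zsmul _ _ _

end Conjugation

section Twist

variable {A B : Type*} [AddCommGroup A] [AddCommGroup B]

/- Built from additive maps so that `A × B` carries `AddCommGroup.toIntModule`, the `ℤ`-module
structure `isomGroup` finds on a product, not `Prod.instModule`; the two are not defeq. -/
def smulFst (d : ℤ) : A × B →ₗ[ℤ] A × B :=
  ((d • AddMonoidHom.id A).prodMap (AddMonoidHom.id B)).toIntLinearMap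

def smulSnd (d : ℤ) : A × B →ₗ[ℤ] A × B :=
  ((AddMonoidHom.id A).prodMap (d • AddMonoidHom.id B)).toIntLinearMap

@[simp]
theorem smulFst_apply (d : ℤ) (p : A × B) : smulFst d p = (d • p.1, p.2) := rfl

@[simp]
theorem smulSnd_apply (d : ℤ) (p : A × B) : smulSnd d p = (p.1, d • p.2) := rfl

theorem smulFst_smulSnd (d : ℤ) (p : A × B) : smulFst d (smulSnd d p) = d • p := rfl

theorem smulSnd_smulFst (d : ℤ) (p : A × B) : smulSnd d (smulFst d p) = d • p := rfl

theorem smulFst_injective [IsAddTorsionFree A] {d : ℤ} (hd : d ≠ 0) :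
    Function.Injective (smulFst d : A × B →ₗ[ℤ] A × B) :=
  (zsmul_right_injective hd).prodMap Function.injective_id

theorem smulSnd_injective [IsAddTorsionFree B] {d : ℤ} (hd : d ≠ 0) :
    Function.Injective (smulSnd d : A × B →ₗ[ℤ] A × B) :=
  Function.injective_id.prodMap (zsmul_right_injective hd)

end Twist

section Unimodular

variable {A B : Type*} [AddCommGroup A] [Module ℤ A] [AddCommGroup B] [Module ℤ B]
  (bA : LinearMap.BilinForm ℤ A) (bB : LinearMap.BilinForm ℤ B)

theorem isAddTorsionFree_of_injective (hA : Function.Injective bA) : IsAddTorsionFree A where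
  nsmul_right_injective n hn x y hxy := hA <| LinearMap.ext fun a => by
    have h := congrArg (bA · a) hxy
    simp only [map_nsmul, LinearMap.smul_apply, nsmul_eq_mul] at h
    exact mul_left_cancel₀ (by exact_mod_cast hn) h

theorem exists_smul_eq_iff_forall_dvd (hA : Function.Bijective bA) (d : ℤ) (s : A) :
    (∃ t, d • t = s) ↔ ∀ a, d ∣ bA s a := by
  refine ⟨?_, fun h => ?_⟩
  · rintro ⟨t, rfl⟩ a
    simp
  let half : A →ₗ[ℤ] ℤ :=
    { toFun := fun a => bA s a / d
      map_add' := fun a a' => by rw [map_add, Int.add_ediv_of_dvd_right (h a')]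
      map_smul' := fun c a => by simp [Int.mul_ediv_assoc c (h a)] }
  obtain ⟨t, ht⟩ := hA.2 half
  refine ⟨t, hA.1 <| LinearMap.ext fun a => ?_⟩
  simp [ht, half, Int.mul_ediv_cancel' (h a)]

theorem mem_range_smulSnd_iff (hB : Function.Bijective bB) (d : ℤ) (p : A × B) :
    p ∈ LinearMap.range (smulSnd d) ↔ ∀ z : A × B, d ∣ d * bA p.1 z.1 + bB p.2 z.2 := by
  simp only [LinearMap.mem_range, Prod.exists, smulSnd_apply, Prod.ext_iff, exists_and_left,
    exists_eq_left, exists_smul_eq_iff_forall_dvd bB hB, dvd_add_right (dvd_mul_right d _)]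
  exact ⟨fun h z => h z.2, fun h b => h (0, b)⟩

theorem mem_range_smulFst_iff (hA : Function.Bijective bA) (d : ℤ) (p : A × B) :
    p ∈ LinearMap.range (smulFst d) ↔ ∀ z : A × B, d ∣ bA p.1 z.1 + d * bB p.2 z.2 := by
  simp only [LinearMap.mem_range, Prod.exists, smulFst_apply, Prod.ext_iff, exists_eq_right,
    exists_smul_eq_iff_forall_dvd bA hA, dvd_add_left (dvd_mul_right d _)]
  exact ⟨fun h z => h z.1, fun h a => h (a, 0)⟩

theorem exists_conj_smulSnd (hB : Function.Bijective bB) {d : ℤ} (hd : d ≠ 0) :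
    ∃ Φ : isomGroup (fun x y : A × B => d * bA x.1 y.1 + bB x.2 y.2) →*
        isomGroup (fun x y : A × B => bA x.1 y.1 + d * bB x.2 y.2),
      ∀ f x, smulSnd d ((Φ f).1 x) = f.1 (smulSnd d x) :=
  have := isAddTorsionFree_of_injective bB hB.1
  exists_conj_monoidHom_isomGroup _ (smulSnd_injective hd) hd
    (fun x y => by simp only [smulSnd_apply, map_zsmul, LinearMap.smul_apply, smul_eq_mul]; ring)
    (mem_range_smulSnd_iff bA bB hB d)

theorem exists_conj_smulFst (hA : Function.Bijective bA) {d : ℤ} (hd : d ≠ 0) :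
    ∃ Ψ : isomGroup (fun x y : A × B => bA x.1 y.1 + d * bB x.2 y.2) →*
        isomGroup (fun x y : A × B => d * bA x.1 y.1 + bB x.2 y.2),
      ∀ g x, smulFst d ((Ψ g).1 x) = g.1 (smulFst d x) :=
  have := isAddTorsionFree_of_injective bA hA.1
  exists_conj_monoidHom_isomGroup _ (smulFst_injective hd) hd
    (fun x y => by simp only [smulFst_apply, map_zsmul, LinearMap.smul_apply, smul_eq_mul]; ring)
    (mem_range_smulFst_iff bA bB hA d)

end Unimodular

theorem twist_map_conjugation_isomorphism_general
    (N M : Type*) [AddCommGroup N] [Module ℤ N] [AddCommGroup M] [Module ℤ M]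
    (bN : LinearMap.BilinForm ℤ N) (bM : LinearMap.BilinForm ℤ M)
    (hNuni : Function.Bijective fun x => bN x)
    (hMuni : Function.Bijective fun x => bM x)
    (φ : N × M → N × M) (hφ : ∀ p : N × M, φ p = (p.1, (2 : ℤ) • p.2)) :
    ∃ Φ : isomGroup (fun x y : N × M => 2 * bN x.1 y.1 + bM x.2 y.2) ≃*
          isomGroup (fun x y : N × M => bN x.1 y.1 + 2 * bM x.2 y.2),
      ∀ (f : isomGroup (fun x y : N × M => 2 * bN x.1 y.1 + bM x.2 y.2)) (x : N × M),
        φ ((Φ f).1 x) = f.1 (φ x) := by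
  have := isAddTorsionFree_of_injective bN hNuni.1
  have := isAddTorsionFree_of_injective bM hMuni.1
  obtain ⟨Φ, hΦ⟩ := exists_conj_smulSnd bN bM hMuni two_ne_zero
  obtain ⟨Ψ, hΨ⟩ := exists_conj_smulFst bN bM hNuni two_ne_zero
  have hΨΦ : Function.LeftInverse Ψ Φ :=
    leftInverse_of_conj two_ne_zero (smulSnd_smulFst 2) hΨ hΦ
  have hΦΨ : Function.LeftInverse Φ Ψ :=
    leftInverse_of_conj two_ne_zero (smulFst_smulSnd 2) hΦ hΨ
  refine ⟨Φ.toMulEquiv Ψ (MonoidHom.ext hΨΦ) (MonoidHom.ext hΦΨ), fun f x => ?_⟩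
  rw [hφ, hφ]
  exact hΦ f x

/-- **The twist map induces an isomorphism of isometry groups.** For unimodular integral
lattices `N`, `M` and `φ : N ⊕ M(2) → N(2) ⊕ M`, `n ⊕ m ↦ n ⊕ 2m`, conjugation by `φ`,
`f ↦ φ⁻¹ ∘ f ∘ φ`, is a well-defined group isomorphism `O(N(2) ⊕ M) ≃ O(N ⊕ M(2))`:
there is a group isomorphism `Φ` between the isometry groups satisfying
`φ (Φ f x) = f (φ x)` for all `f` and `x`. -/
theorem twist_map_conjugation_isomorphism
    (N M : Type*) [AddCommGroup N] [Module ℤ N] [AddCommGroup M] [Module ℤ M]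
    [Module.Free ℤ N] [Module.Finite ℤ N] [Module.Free ℤ M] [Module.Finite ℤ M]
    (bN : LinearMap.BilinForm ℤ N) (bM : LinearMap.BilinForm ℤ M)
    (hNsymm : ∀ x y, bN x y = bN y x) (hMsymm : ∀ x y, bM x y = bM y x)
    (hNuni : Function.Bijective fun x => bN x)
    (hMuni : Function.Bijective fun x => bM x)
    (φ : N × M → N × M) (hφ : ∀ p : N × M, φ p = (p.1, (2 : ℤ) • p.2)) :
    ∃ Φ : isomGroup (fun x y : N × M => 2 * bN x.1 y.1 + bM x.2 y.2) ≃*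
          isomGroup (fun x y : N × M => bN x.1 y.1 + 2 * bM x.2 y.2),
      ∀ (f : isomGroup (fun x y : N × M => 2 * bN x.1 y.1 + bM x.2 y.2)) (x : N × M),
        φ ((Φ f).1 x) = f.1 (φ x) :=
  twist_map_conjugation_isomorphism_general N M bN bM hNuni hMuni φ hφ
end

section
/- The natural reduction map O(E8) → O(E8/2E8), sending an isometry of the E8 lattice to the induced automorphism of the quadratic space E8/2E8 over 𝔽₂, is surjective. -/
/-- A Gram matrix of the `E8` root lattice (the Cartan matrix of `E8`):
even, unimodular, positive definite of rank `8`. -/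
def gramE8 : Matrix (Fin 8) (Fin 8) ℤ :=
  !![ 2,-1, 0, 0, 0, 0, 0, 0;
     -1, 2,-1, 0, 0, 0, 0, 0;
      0,-1, 2,-1, 0, 0, 0,-1;
      0, 0,-1, 2,-1, 0, 0, 0;
      0, 0, 0,-1, 2,-1, 0, 0;
      0, 0, 0, 0,-1, 2,-1, 0;
      0, 0, 0, 0, 0,-1, 2, 0;
      0, 0,-1, 0, 0, 0, 0, 2]

/-- The bilinear form of the `E8` lattice on `ℤ^8`. -/
noncomputable def bE8 : LinearMap.BilinForm ℤ (Fin 8 → ℤ) := Matrix.toBilin' gramE8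

/-- The reduction map `E8 → E8/2E8 ≅ 𝔽₂^8`. -/
def redE8 (x : Fin 8 → ℤ) : Fin 8 → ZMod 2 := fun i => (x i : ZMod 2)

/-- The quadratic form `q(e + 2E8) = ½(e,e)_{E8} mod 2` on `E8/2E8 ≅ 𝔽₂^8`, computed via
the canonical lift.  (Since `E8` is even, this function is the well-defined discriminant
quadratic form of the quotient.) -/
noncomputable def qbarE8 (x : Fin 8 → ZMod 2) : ZMod 2 :=
  ((bE8 (fun i => ((x i).val : ℤ)) (fun i => ((x i).val : ℤ))) / 2 : ℤ)

/-! The simple roots `Pi.single i 1` reduce to a basis of `E8/2E8` on which `q = 1`, so their images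
under `g` are nonsingular vectors. Every nonsingular vector is the reduction of a root, and two roots
with distinct reductions have inner product in `{-1, 0, 1}` (positive definiteness), whose parity is
prescribed by `g`. Fixing the signs of the lifts along the (tree-shaped) Dynkin diagram therefore gives
roots `r i` with Gram matrix `gramE8`. The map `Pi.single i 1 ↦ r i` is then an isometry of the lattice
lifting `g`, and it is invertible because `det gramE8 ≠ 0` forces its determinant to be `±1`. -/

open Matrix

theorem Matrix.exists_linearEquiv_of_gram_eq {n R : Type*} [Fintype n] [DecidableEq n]
    [CommRing R] [IsDomain R] {G : Matrix n n R} (hG : G.det ≠ 0) (r : n → n → R)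
    (hr : ∀ i j, G.toBilin' (r i) (r j) = G i j) :
    ∃ f : (n → R) ≃ₗ[R] (n → R),
      (∀ x y, G.toBilin' (f x) (f y) = G.toBilin' x y) ∧ ∀ i, f (Pi.single i 1) = r i := by
  set M : Matrix n n R := (Matrix.of r)ᵀ
  have hMr : ∀ i, M *ᵥ Pi.single i 1 = r i := fun i => by ext k; simp [M]
  have hcomp : ∀ x y, G.toBilin' (M *ᵥ x) (M *ᵥ y) = (Mᵀ * G * M).toBilin' x y := fun x y => by
    rw [← toBilin'_comp]; rfl
  have hM : Mᵀ * G * M = G := by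
    ext i j
    rw [← toBilin'_single (Mᵀ * G * M), ← hcomp, hMr, hMr, hr]
  have hdet : IsUnit M.det := by
    have h := congrArg Matrix.det hM
    rw [det_mul, det_mul, det_transpose, mul_comm, ← mul_assoc] at h
    exact IsUnit.of_mul_eq_one M.det (mul_left_cancel₀ hG (by linear_combination h))
  let f := M.toLinearEquiv' (M.invertibleOfIsUnitDet hdet)
  have hf : ∀ x, f x = M *ᵥ x := fun x => rfl
  exact ⟨f, fun x y => by rw [hf, hf, hcomp, hM], fun i => by rw [hf, hMr]⟩

def halfNormE8 {R : Type*} [CommRing R] (x : Fin 8 → R) : R :=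
  ∑ i, x i ^ 2 - (x 0 * x 1 + x 1 * x 2 + x 2 * x 3 + x 3 * x 4 + x 4 * x 5 + x 5 * x 6 + x 2 * x 7)

theorem map_halfNormE8 {R S : Type*} [CommRing R] [CommRing S] (φ : R →+* S) (x : Fin 8 → R) :
    φ (halfNormE8 x) = halfNormE8 (φ ∘ x) := by
  simp [halfNormE8]

theorem bE8_comm (x y : Fin 8 → ℤ) : bE8 x y = bE8 y x := by
  rw [bE8, toBilin'_apply', toBilin'_apply', dotProduct_comm, dotProduct_mulVec,
    ← mulVec_transpose, show gramE8ᵀ = gramE8 by decide]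

theorem bE8_self (x : Fin 8 → ℤ) : bE8 x x = 2 * halfNormE8 x := by
  simp only [bE8, toBilin'_apply', dotProduct, mulVec, Fin.sum_univ_eight, halfNormE8, gramE8,
    of_apply, cons_val', cons_val_zero, cons_val_one, cons_val, cons_val_fin_one]
  ring

theorem halfNormE8_add (x y : Fin 8 → ℤ) :
    halfNormE8 (x + y) = halfNormE8 x + halfNormE8 y + bE8 x y := by
  have h := bE8_self (x + y)
  simp only [map_add, LinearMap.add_apply, bE8_self, bE8_comm y x] at h
  linarith

theorem halfNormE8_neg (x : Fin 8 → ℤ) : halfNormE8 (-x) = halfNormE8 x := by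
  simp [halfNormE8]

-- Complete the squares from the leaves of the Dynkin diagram towards the branch node `2`.
theorem halfNormE8_sos (x : Fin 8 → ℤ) :
    120 * halfNormE8 x = 30 * (2 * x 0 - x 1) ^ 2 + 10 * (3 * x 1 - 2 * x 2) ^ 2
      + 30 * (2 * x 6 - x 5) ^ 2 + 10 * (3 * x 5 - 2 * x 4) ^ 2 + 5 * (4 * x 4 - 3 * x 3) ^ 2
      + 3 * (5 * x 3 - 4 * x 2) ^ 2 + 30 * (2 * x 7 - x 2) ^ 2 + 2 * x 2 ^ 2 := by
  simp only [halfNormE8, Fin.sum_univ_eight]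
  ring

theorem eq_zero_of_halfNormE8_nonpos {x : Fin 8 → ℤ} (h : halfNormE8 x ≤ 0) : x = 0 := by
  have hs := halfNormE8_sos x
  have h0 := sq_nonneg (2 * x 0 - x 1)
  have h1 := sq_nonneg (3 * x 1 - 2 * x 2)
  have h6 := sq_nonneg (2 * x 6 - x 5)
  have h5 := sq_nonneg (3 * x 5 - 2 * x 4)
  have h4 := sq_nonneg (4 * x 4 - 3 * x 3)
  have h3 := sq_nonneg (5 * x 3 - 4 * x 2)
  have h7 := sq_nonneg (2 * x 7 - x 2)
  have h2 := sq_nonneg (x 2)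
  have z0 : 2 * x 0 - x 1 = 0 := (sq_nonpos_iff _).mp (by linarith)
  have z1 : 3 * x 1 - 2 * x 2 = 0 := (sq_nonpos_iff _).mp (by linarith)
  have z6 : 2 * x 6 - x 5 = 0 := (sq_nonpos_iff _).mp (by linarith)
  have z5 : 3 * x 5 - 2 * x 4 = 0 := (sq_nonpos_iff _).mp (by linarith)
  have z4 : 4 * x 4 - 3 * x 3 = 0 := (sq_nonpos_iff _).mp (by linarith)
  have z3 : 5 * x 3 - 4 * x 2 = 0 := (sq_nonpos_iff _).mp (by linarith)
  have z7 : 2 * x 7 - x 2 = 0 := (sq_nonpos_iff _).mp (by linarith)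
  have z2 : x 2 = 0 := (sq_nonpos_iff _).mp (by linarith)
  funext i
  fin_cases i <;> simp <;> omega

theorem det_gramE8_ne_zero : gramE8.det ≠ 0 := by
  intro h
  obtain ⟨v, hv, hGv⟩ := exists_mulVec_eq_zero_iff.mpr h
  have hb : bE8 v v = 0 := by rw [bE8, toBilin'_apply', hGv, dotProduct_zero]
  exact hv (eq_zero_of_halfNormE8_nonpos (by linarith [bE8_self v]))

theorem redE8_add (x y : Fin 8 → ℤ) : redE8 (x + y) = redE8 x + redE8 y := by
  funext i; simp [redE8]

theorem redE8_neg (x : Fin 8 → ℤ) : redE8 (-x) = redE8 x := by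
  funext i; simp [redE8, ZMod.neg_eq_self_mod_two]

theorem redE8_single (i : Fin 8) : redE8 (Pi.single i 1) = Pi.single i 1 := by
  funext j; by_cases h : j = i <;> simp [redE8, h]

theorem qbarE8_eq_halfNormE8 (v : Fin 8 → ZMod 2) : qbarE8 v = halfNormE8 v := by
  rw [qbarE8, bE8_self, Int.mul_ediv_cancel_left _ two_ne_zero]
  exact (map_halfNormE8 (Int.castRingHom (ZMod 2)) _).trans (congrArg halfNormE8 (by ext; simp))

theorem qbarE8_redE8 (x : Fin 8 → ℤ) : qbarE8 (redE8 x) = halfNormE8 x := by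
  rw [qbarE8_eq_halfNormE8]
  exact (map_halfNormE8 (Int.castRingHom (ZMod 2)) x).symm

noncomputable def polarE8 (x y : Fin 8 → ZMod 2) : ZMod 2 := qbarE8 (x + y) - qbarE8 x - qbarE8 y

theorem polarE8_redE8 (x y : Fin 8 → ℤ) : polarE8 (redE8 x) (redE8 y) = bE8 x y := by
  rw [polarE8, ← redE8_add, qbarE8_redE8, qbarE8_redE8, qbarE8_redE8, halfNormE8_add]
  push_cast
  ring

theorem abs_bE8_le_one {r s : Fin 8 → ℤ} (hr : bE8 r r = 2) (hs : bE8 s s = 2)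
    (hrs : redE8 r ≠ redE8 s) : |bE8 r s| ≤ 1 := by
  rw [bE8_self] at hr hs
  rw [abs_le]
  constructor
  · by_contra! h
    have h0 : r + s = 0 := eq_zero_of_halfNormE8_nonpos (by linarith [halfNormE8_add r s])
    rw [eq_neg_of_add_eq_zero_left h0, redE8_neg] at hrs
    exact hrs rfl
  · by_contra! h
    have h0 : r + -s = 0 := eq_zero_of_halfNormE8_nonpos (by
      linarith [halfNormE8_add r (-s), halfNormE8_neg s, map_neg (bE8 r) s])
    rw [← sub_eq_add_neg, sub_eq_zero] at h0
    exact hrs (congrArg redE8 h0)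

theorem bE8_eq_zero_of_polarE8_eq_zero {r s : Fin 8 → ℤ} (hr : bE8 r r = 2) (hs : bE8 s s = 2)
    (hrs : redE8 r ≠ redE8 s) (h : polarE8 (redE8 r) (redE8 s) = 0) : bE8 r s = 0 := by
  rw [polarE8_redE8, ZMod.intCast_zmod_eq_zero_iff_dvd] at h
  obtain ⟨h₁, h₂⟩ := abs_le.mp (abs_bE8_le_one hr hs hrs)
  omega

def raiseRootE8 (α : Fin 8 → ℤ) : List (Fin 8 → ℤ) :=
  (List.finRange 8).filterMap fun i =>
    if halfNormE8 (α + Pi.single i 1) = 1 then some (α + Pi.single i 1) else none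

-- A positive root of height `h + 1` is a positive root of height `h` plus a simple root,
-- and the highest root has height `29`.
def positiveRootsE8 : List (Fin 8 → ℤ) :=
  ((List.range 28).scanl (fun L _ => (L.flatMap raiseRootE8).dedup)
    (List.ofFn fun i => Pi.single i 1)).flatten

theorem halfNormE8_of_mem_positiveRootsE8 : ∀ r ∈ positiveRootsE8, halfNormE8 r = 1 := by
  decide +kernel

theorem exists_mem_positiveRootsE8_redE8_eq :
    ∀ v : Fin 8 → ZMod 2, halfNormE8 v = 1 → ∃ r ∈ positiveRootsE8, redE8 r = v := by
  decide +kernel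

theorem exists_root_redE8_eq {v : Fin 8 → ZMod 2} (hv : qbarE8 v = 1) :
    ∃ r, bE8 r r = 2 ∧ redE8 r = v := by
  rw [qbarE8_eq_halfNormE8] at hv
  obtain ⟨r, hr, rfl⟩ := exists_mem_positiveRootsE8_redE8_eq v hv
  exact ⟨r, by rw [bE8_self, halfNormE8_of_mem_positiveRootsE8 r hr, mul_one], rfl⟩

theorem exists_root_redE8_eq_of_polarE8_eq_one {a : Fin 8 → ℤ} (ha : bE8 a a = 2)
    {v : Fin 8 → ZMod 2} (hv : qbarE8 v = 1) (hav : polarE8 (redE8 a) v = 1) :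
    ∃ r, bE8 r r = 2 ∧ redE8 r = v ∧ bE8 a r = -1 := by
  obtain ⟨s, hs, rfl⟩ := exists_root_redE8_eq hv
  rw [polarE8_redE8] at hav
  have hne : redE8 a ≠ redE8 s := fun h => by
    rw [← polarE8_redE8, h, polarE8_redE8, hs] at hav
    exact absurd hav (by decide)
  obtain ⟨h₁, h₂⟩ := abs_le.mp (abs_bE8_le_one ha hs hne)
  obtain h | h | h : bE8 a s = -1 ∨ bE8 a s = 0 ∨ bE8 a s = 1 := by omega
  · exact ⟨s, hs, rfl, h⟩
  · rw [h] at hav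
    exact absurd hav (by decide)
  · exact ⟨-s, by simpa using hs, redE8_neg s, by simp [h]⟩

theorem qbarE8_single (i : Fin 8) : qbarE8 (Pi.single i 1) = 1 := by
  rw [← redE8_single, qbarE8_redE8]
  fin_cases i <;> decide

theorem polarE8_single (i j : Fin 8) :
    polarE8 (Pi.single i 1) (Pi.single j 1) = gramE8 i j := by
  rw [← redE8_single, ← redE8_single, polarE8_redE8, bE8, toBilin'_single]

theorem polarE8_map {g : (Fin 8 → ZMod 2) ≃ₗ[ZMod 2] (Fin 8 → ZMod 2)}
    (hg : ∀ x, qbarE8 (g x) = qbarE8 x) (x y : Fin 8 → ZMod 2) :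
    polarE8 (g x) (g y) = polarE8 x y := by
  rw [polarE8, polarE8, ← map_add, hg, hg, hg]

theorem bE8_eq_zero_of_gramE8_eq_zero {g : (Fin 8 → ZMod 2) ≃ₗ[ZMod 2] (Fin 8 → ZMod 2)}
    (hg : ∀ x, qbarE8 (g x) = qbarE8 x) {r : Fin 8 → Fin 8 → ℤ} (hr : ∀ i, bE8 (r i) (r i) = 2)
    (hred : ∀ i, redE8 (r i) = g (Pi.single i 1)) {i j : Fin 8} (hij : gramE8 i j = 0) :
    bE8 (r i) (r j) = 0 := by
  have hne : i ≠ j := by rintro rfl; revert hij; fin_cases i <;> decide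
  refine bE8_eq_zero_of_polarE8_eq_zero (hr i) (hr j) ?_ ?_
  · rw [hred, hred]
    exact fun h => hne (by simpa [Pi.single_apply] using congrFun (g.injective h) i)
  · rw [hred, hred, polarE8_map hg, polarE8_single, hij, Int.cast_zero]

theorem exists_root_lifts_gram_eq (g : (Fin 8 → ZMod 2) ≃ₗ[ZMod 2] (Fin 8 → ZMod 2))
    (hg : ∀ x, qbarE8 (g x) = qbarE8 x) :
    ∃ r : Fin 8 → Fin 8 → ℤ,
      (∀ i j, bE8 (r i) (r j) = gramE8 i j) ∧ ∀ i, redE8 (r i) = g (Pi.single i 1) := by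
  set e : Fin 8 → Fin 8 → ZMod 2 := fun i => g (Pi.single i 1)
  have he : ∀ i, qbarE8 (e i) = 1 := fun i => by rw [hg, qbarE8_single]
  have hpolar : ∀ i j, polarE8 (e i) (e j) = gramE8 i j := fun i j => by
    rw [polarE8_map hg, polarE8_single]
  obtain ⟨r0, h0, e0⟩ := exists_root_redE8_eq (he 0)
  obtain ⟨r1, h1, e1, b01⟩ := exists_root_redE8_eq_of_polarE8_eq_one h0 (he 1)
    (by rw [e0, hpolar]; decide)
  obtain ⟨r2, h2, e2, b12⟩ := exists_root_redE8_eq_of_polarE8_eq_one h1 (he 2)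
    (by rw [e1, hpolar]; decide)
  obtain ⟨r3, h3, e3, b23⟩ := exists_root_redE8_eq_of_polarE8_eq_one h2 (he 3)
    (by rw [e2, hpolar]; decide)
  obtain ⟨r4, h4, e4, b34⟩ := exists_root_redE8_eq_of_polarE8_eq_one h3 (he 4)
    (by rw [e3, hpolar]; decide)
  obtain ⟨r5, h5, e5, b45⟩ := exists_root_redE8_eq_of_polarE8_eq_one h4 (he 5)
    (by rw [e4, hpolar]; decide)
  obtain ⟨r6, h6, e6, b56⟩ := exists_root_redE8_eq_of_polarE8_eq_one h5 (he 6)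
    (by rw [e5, hpolar]; decide)
  obtain ⟨r7, h7, e7, b27⟩ := exists_root_redE8_eq_of_polarE8_eq_one h2 (he 7)
    (by rw [e2, hpolar]; decide)
  set r : Fin 8 → Fin 8 → ℤ := ![r0, r1, r2, r3, r4, r5, r6, r7]
  have hroot : ∀ i, bE8 (r i) (r i) = 2 := by intro i; fin_cases i <;> assumption
  have hred : ∀ i, redE8 (r i) = e i := by intro i; fin_cases i <;> assumption
  have hzero : ∀ i j, gramE8 i j = 0 → bE8 (r i) (r j) = 0 := fun i j =>
    bE8_eq_zero_of_gramE8_eq_zero hg hroot hred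
  refine ⟨r, fun i j => ?_, hred⟩
  have hcomm := bE8_comm
  -- abstracting `bE8` stops the case analysis below from unfolding it in failed unifications
  generalize bE8 = b at *
  fin_cases i <;> fin_cases j <;>
    first
    | exact hroot _
    | exact hzero _ _ rfl
    | assumption
    | (rw [hcomm]; assumption)

theorem redE8_apply_eq_of_single {f : (Fin 8 → ℤ) →ₗ[ℤ] (Fin 8 → ℤ)}
    {g : (Fin 8 → ZMod 2) →ₗ[ZMod 2] (Fin 8 → ZMod 2)}
    (h : ∀ i, redE8 (f (Pi.single i 1)) = g (Pi.single i 1)) (x : Fin 8 → ℤ) :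
    redE8 (f x) = g (redE8 x) := by
  let ρ : (Fin 8 → ℤ) →ₗ[ℤ] (Fin 8 → ZMod 2) :=
    { toFun := redE8
      map_add' := redE8_add
      map_smul' := fun c x => by funext i; simp [redE8] }
  have hρ : ρ ∘ₗ f = g.restrictScalars ℤ ∘ₗ ρ := (Pi.basisFun ℤ (Fin 8)).ext fun i => by
    simpa [ρ, redE8_single] using h i
  exact LinearMap.congr_fun hρ x

/-- **Surjectivity of `O(E8) → O(E8/2E8)`.**  Every automorphism of the quadratic space
`E8/2E8 ≅ 𝔽₂^8` (with quadratic form `q(e + 2E8) = ½(e,e) mod 2`) is induced by an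
isometry of the `E8` lattice. -/
theorem OE8_to_OE8mod2_surjective :
    ∀ g : (Fin 8 → ZMod 2) ≃ₗ[ZMod 2] (Fin 8 → ZMod 2),
      (∀ x : Fin 8 → ZMod 2, qbarE8 (g x) = qbarE8 x) →
      ∃ f : (Fin 8 → ℤ) ≃ₗ[ℤ] (Fin 8 → ℤ),
        (∀ x y : Fin 8 → ℤ, bE8 (f x) (f y) = bE8 x y) ∧
        (∀ x : Fin 8 → ℤ, redE8 (f x) = g (redE8 x)) := by
  intro g hg
  obtain ⟨r, hgram, hred⟩ := exists_root_lifts_gram_eq g hg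
  obtain ⟨f, hf, hfr⟩ := exists_linearEquiv_of_gram_eq det_gramE8_ne_zero r hgram
  exact ⟨f, hf, redE8_apply_eq_of_single (f := f.toLinearMap) (g := g.toLinearMap)
    fun i => by simp [hfr, hred]⟩
end

section
/- Let L be an even lattice, T ⊆ L a primitive sublattice with orthogonal complement T^⊥, and suppose φ ∈ O(T) and ψ ∈ O(T^⊥) are isometries such that the induced maps on discriminant groups satisfy γ ∘ ψ̄ = φ̄ ∘ γ, where γ : M̄_⊥ → M̄ is the gluing isomorphism determined by L/(T ⊕ T^⊥) ⊆ A_T ⊕ A_{T^⊥}. Then φ ⊕ ψ extends to an isometry of L. -/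
/-!
The gluing condition says that `g = φ ⊕ ψ` sends every `x ∈ L` into `y + (T ⊕ P)` for some
`y ∈ L`, so `g L ⊆ L`. Since `g` restricts to automorphisms of `T` and `P`, it permutes `T ⊕ P`
and therefore induces an injective endomorphism of `L / (T ⊕ P)`. This quotient is finite,
because `T ⊕ P` spans `V` over `ℚ` and `L` is finitely generated, so the endomorphism is also
surjective, which gives `g L = L`.
-/

namespace Submodule

theorem exists_int_smul_mem_of_mem_span_rat {V : Type*} [AddCommGroup V] [Module ℚ V]
    (T : Submodule ℤ V) {v : V} (hv : v ∈ span ℚ (T : Set V)) : ∃ n : ℤ, n ≠ 0 ∧ n • v ∈ T := by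
  induction hv using span_induction with
  | mem x hx => exact ⟨1, one_ne_zero, by simpa using hx⟩
  | zero => exact ⟨1, one_ne_zero, by simp⟩
  | add x y _ _ hx hy =>
    obtain ⟨n, hn, hnx⟩ := hx
    obtain ⟨m, hm, hmy⟩ := hy
    refine ⟨n * m, mul_ne_zero hn hm, ?_⟩
    have : (n * m) • (x + y) = m • n • x + n • m • y := by module
    rw [this]
    exact T.add_mem (T.smul_mem m hnx) (T.smul_mem n hmy)
  | smul q x _ hx =>
    obtain ⟨n, hn, hnx⟩ := hx
    refine ⟨n * q.den, mul_ne_zero hn (mod_cast q.den_nz), ?_⟩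
    have : (n * q.den) • q • x = q.num • n • x := by
      rw [← Int.cast_smul_eq_zsmul ℚ, ← Int.cast_smul_eq_zsmul ℚ q.num, ← Rat.mul_den_eq_num]
      module
    rw [this]
    exact T.smul_mem _ hnx

theorem finite_quotient_of_forall_exists_int_smul_mem {V : Type*} [AddCommGroup V]
    {L S : Submodule ℤ V} (hL : L.FG) (h : ∀ x ∈ L, ∃ n : ℤ, n ≠ 0 ∧ n • x ∈ S) :
    Finite (L ⧸ S.comap L.subtype) := by
  have : Module.Finite ℤ L := Module.Finite.iff_fg.mpr hL
  refine Module.finite_of_fg_torsion _ fun q => ?_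
  obtain ⟨x, rfl⟩ := Quotient.mk_surjective _ q
  obtain ⟨n, hn, hnx⟩ := h x x.2
  refine ⟨⟨n, mem_nonZeroDivisors_of_ne_zero hn⟩, ?_⟩
  rw [Submonoid.smul_def, ← Quotient.mk_smul, Quotient.mk_eq_zero]
  exact hnx

theorem sub_mem_sup_of_projection_sub_mem {R : Type*} [Ring R] {E : Type*} [AddCommGroup E]
    [Module R E] {p q : Submodule R E} (hpq : IsCompl p q) {T P : Submodule ℤ E} {x y : E}
    (hT : p.projection q hpq x - p.projection q hpq y ∈ T)
    (hP : q.projection p hpq.symm x - q.projection p hpq.symm y ∈ P) : x - y ∈ T ⊔ P := by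
  have hsplit : (p.projection q hpq x - p.projection q hpq y)
      + (q.projection p hpq.symm x - q.projection p hpq.symm y) = x - y := by
    rw [sub_add_sub_comm, projection_add_projection_eq_self, projection_add_projection_eq_self]
  exact hsplit ▸ add_mem_sup hT hP

theorem map_eq_of_map_le_of_finite_quotient {R M : Type*} [Ring R] [AddCommGroup M]
    [Module R M] (e : M ≃ₗ[R] M) {S L : Submodule R M} (hSL : S ≤ L)
    [Finite (L ⧸ S.comap L.subtype)] (hL : L.map (e : M →ₗ[R] M) ≤ L)
    (hS : S.map (e : M →ₗ[R] M) = S) : L.map (e : M →ₗ[R] M) = L := by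
  have hmem : ∀ x, e x ∈ S ↔ x ∈ S := fun x => by
    conv_lhs => rw [← hS]
    simp [mem_map_equiv]
  let S' := S.comap L.subtype
  let f : L →ₗ[R] L := e.toLinearMap.restrict fun x hx => hL (mem_map_of_mem hx)
  have hf : S' ≤ S'.comap f := fun x hx => (hmem x).2 hx
  have hinj : Function.Injective (S'.mapQ S' f hf) := by
    rw [← LinearMap.ker_eq_bot, eq_bot_iff]
    intro q hq
    obtain ⟨x, rfl⟩ := Quotient.mk_surjective _ q
    rw [LinearMap.mem_ker, mapQ_apply, Quotient.mk_eq_zero] at hq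
    rw [mem_bot, Quotient.mk_eq_zero]
    exact (hmem x).1 hq
  refine le_antisymm hL fun z hz => ?_
  obtain ⟨q, hq⟩ := (Finite.injective_iff_surjective.mp hinj) (Quotient.mk ⟨z, hz⟩)
  obtain ⟨x, rfl⟩ := Quotient.mk_surjective _ q
  rw [mapQ_apply, Quotient.eq] at hq
  have hxz : x - e.symm z ∈ S := (hmem _).1 (by rw [map_sub, e.apply_symm_apply]; exact hq)
  rw [mem_map_equiv]
  simpa using L.sub_mem x.2 (hSL hxz)

end Submodule

theorem nikulin_gluing_extension_general
    (V : Type*) [AddCommGroup V] [Module ℚ V]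
    (b : LinearMap.BilinForm ℚ V)
    (L : Submodule ℤ V) (hLfg : L.FG)
    (T P : Submodule ℤ V) (hTL : T ≤ L)
    (hP : ∀ x : V, x ∈ P ↔ x ∈ L ∧ ∀ t ∈ T, b x t = 0)
    (hcompl : IsCompl (Submodule.span ℚ (T : Set V)) (Submodule.span ℚ (P : Set V)))
    (φ ψ : V ≃ₗ[ℚ] V)
    (hφT : φ '' (T : Set V) = (T : Set V))
    (hφfix : ∀ x ∈ Submodule.span ℚ (P : Set V), φ x = x)
    (hψP : ψ '' (P : Set V) = (P : Set V))
    (hψfix : ∀ x ∈ Submodule.span ℚ (T : Set V), ψ x = x)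
    (hglue : ∀ x ∈ L, ∃ y ∈ L,
      ((Submodule.linearProjOfIsCompl _ _ hcompl (φ (ψ x)) : V)
          - (Submodule.linearProjOfIsCompl _ _ hcompl y : V)) ∈ T
        ∧ ((Submodule.linearProjOfIsCompl _ _ hcompl.symm (φ (ψ x)) : V)
          - (Submodule.linearProjOfIsCompl _ _ hcompl.symm y : V)) ∈ P) :
    (fun x => φ (ψ x)) '' (L : Set V) = (L : Set V)
    ∧ (∀ t ∈ T, φ (ψ t) = φ t)
    ∧ (∀ p ∈ P, φ (ψ p) = ψ p) := by
  have hPL : P ≤ L := fun x hx => ((hP x).1 hx).1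
  have hgT : ∀ t ∈ T, φ (ψ t) = φ t := fun t ht => by rw [hψfix t (Submodule.subset_span ht)]
  have hgP : ∀ p ∈ P, φ (ψ p) = ψ p := fun p hp =>
    hφfix _ (Submodule.subset_span (hψP ▸ Set.mem_image_of_mem ψ hp))
  refine ⟨?_, hgT, hgP⟩
  let g : V ≃ₗ[ℤ] V := (ψ.trans φ).restrictScalars ℤ
  have hgS : (T ⊔ P).map (g : V →ₗ[ℤ] V) = T ⊔ P := by
    rw [Submodule.map_sup]
    congr 1 <;> refine SetLike.coe_injective ?_ <;> rw [Submodule.map_coe]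
    · exact (Set.image_congr hgT).trans hφT
    · exact (Set.image_congr hgP).trans hψP
  have hgL : L.map (g : V →ₗ[ℤ] V) ≤ L := by
    rintro _ ⟨x, hx, rfl⟩
    obtain ⟨y, hy, hyT, hyP⟩ := hglue x hx
    have hxy := Submodule.sub_mem_sup_of_projection_sub_mem hcompl hyT hyP
    simpa [g] using L.add_mem (sup_le hTL hPL hxy) hy
  have hspan : Submodule.span ℚ ((T ⊔ P : Submodule ℤ V) : Set V) = ⊤ :=
    top_unique <| hcompl.sup_eq_top ▸ sup_le
      (Submodule.span_mono (SetLike.coe_mono le_sup_left))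
      (Submodule.span_mono (SetLike.coe_mono le_sup_right))
  have := Submodule.finite_quotient_of_forall_exists_int_smul_mem hLfg fun x _ =>
    (T ⊔ P).exists_int_smul_mem_of_mem_span_rat (hspan ▸ Submodule.mem_top)
  exact congrArg SetLike.coe
    (Submodule.map_eq_of_map_le_of_finite_quotient g (sup_le hTL hPL) hgL hgS)

/-- **Nikulin's gluing criterion (Corollary 1.5.2 of Nikulin).**  Let `L` be an even
lattice: a full finitely generated `ℤ`-lattice in a finite-dimensional rational quadratic
space `(V, b)`, with `b` symmetric, non-degenerate, integral and even on `L`.  Let `T ⊆ L`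
be a primitive sublattice with orthogonal complement `P = T^⊥` in `L`, whose rational
spans are complementary in `V`.  Let `φ` be an isometry of `T` and `ψ` an isometry of `P`,
extended to isometries of `V` fixing the rational span of the other summand pointwise.
Assume the induced maps on the discriminant groups are compatible with the gluing
isomorphism `γ` determined by `L/(T ⊕ P) ⊆ A_T ⊕ A_P` (i.e. `γ ∘ ψ̄ = φ̄ ∘ γ`); concretely:
for every `x ∈ L`, with components `x_T`, `x_P` along the decomposition
`V = span T ⊕ span P`, there is `y ∈ L` with `φ(x_T) ≡ y_T mod T` and
`ψ(x_P) ≡ y_P mod P`.  Then `φ ⊕ ψ` extends to an isometry of `L`: the isometry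
`x ↦ φ(ψ x)` of `V` maps `L` onto `L`, and it restricts to `φ` on `T` and to `ψ` on `P`. -/
theorem nikulin_gluing_extension
    (V : Type*) [AddCommGroup V] [Module ℚ V] [FiniteDimensional ℚ V]
    (b : LinearMap.BilinForm ℚ V) (hsymm : ∀ x y, b x y = b y x)
    (hnd : b.Nondegenerate)
    (L : Submodule ℤ V) (hLfg : L.FG) (hLfull : Submodule.span ℚ (L : Set V) = ⊤)
    (hint : ∀ x ∈ L, ∀ y ∈ L, ∃ n : ℤ, b x y = n)
    (heven : ∀ x ∈ L, ∃ n : ℤ, b x x = 2 * n)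
    (T P : Submodule ℤ V) (hTL : T ≤ L)
    (hTprim : ∀ x ∈ L, (∃ n : ℤ, n ≠ 0 ∧ n • x ∈ T) → x ∈ T)
    (hP : ∀ x : V, x ∈ P ↔ x ∈ L ∧ ∀ t ∈ T, b x t = 0)
    (hcompl : IsCompl (Submodule.span ℚ (T : Set V)) (Submodule.span ℚ (P : Set V)))
    (φ ψ : V ≃ₗ[ℚ] V)
    (hφisom : ∀ x y, b (φ x) (φ y) = b x y) (hψisom : ∀ x y, b (ψ x) (ψ y) = b x y)
    (hφT : φ '' (T : Set V) = (T : Set V))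
    (hφfix : ∀ x ∈ Submodule.span ℚ (P : Set V), φ x = x)
    (hψP : ψ '' (P : Set V) = (P : Set V))
    (hψfix : ∀ x ∈ Submodule.span ℚ (T : Set V), ψ x = x)
    (hglue : ∀ x ∈ L, ∃ y ∈ L,
      ((Submodule.linearProjOfIsCompl _ _ hcompl (φ (ψ x)) : V)
          - (Submodule.linearProjOfIsCompl _ _ hcompl y : V)) ∈ T
        ∧ ((Submodule.linearProjOfIsCompl _ _ hcompl.symm (φ (ψ x)) : V)
          - (Submodule.linearProjOfIsCompl _ _ hcompl.symm y : V)) ∈ P) :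
    (fun x => φ (ψ x)) '' (L : Set V) = (L : Set V)
    ∧ (∀ t ∈ T, φ (ψ t) = φ t)
    ∧ (∀ p ∈ P, φ (ψ p) = ψ p) :=
  nikulin_gluing_extension_general V b L hLfg T P hTL hP hcompl φ ψ hφT hφfix hψP hψfix hglue
end

section
/- In the lattice Λ_N = U(2)³ ⊕ E8(-1) ⊕ ⟨-2⟩², let Σ be the element whose components in the two ⟨-2⟩ summands are the generators g₁ and -g₂ respectively, i.e., Σ = g₁ - g₂, so that Σ has square -4. Then the sublattice of elements of even divisibility in Σ^⊥ equals the image of the embedding U³(2) ⊕ E8(-2) ⊕ ⟨-2⟩(2) → Λ_N given by u ⊕ e ⊕ k ↦ u ⊕ 2e ⊕ k·g₁ ⊕ k·g₂; equivalently, an element u ⊕ e ⊕ k·g₁ ⊕ k·g₂ ∈ Σ^⊥ has even divisibility iff e ∈ 2E8(-1). -/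
/-- The Gram matrix of `U³`, three copies of the hyperbolic plane. -/
def gramU3 : Matrix (Fin 6) (Fin 6) ℤ :=
  !![0,1,0,0,0,0; 1,0,0,0,0,0;
     0,0,0,1,0,0; 0,0,1,0,0,0;
     0,0,0,0,0,1; 0,0,0,0,1,0]

/-- The bilinear form of `U³` on `ℤ^6`. -/
noncomputable def bU3 : LinearMap.BilinForm ℤ (Fin 6 → ℤ) := Matrix.toBilin' gramU3

/-- The underlying group of the Nikulin lattice `Λ_N = U(2)³ ⊕ E8(-1) ⊕ ⟨-2⟩ ⊕ ⟨-2⟩`. -/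
abbrev LamN : Type := (Fin 6 → ℤ) × (Fin 8 → ℤ) × ℤ × ℤ

/-- The bilinear form of `Λ_N = U(2)³ ⊕ E8(-1) ⊕ ⟨-2⟩²`. -/
noncomputable def bLamN : LinearMap.BilinForm ℤ LamN :=
  (2 : ℤ) • (bU3.compl₁₂ (LinearMap.fst ℤ _ _) (LinearMap.fst ℤ _ _))
  - bE8.compl₁₂ ((LinearMap.fst ℤ _ _).comp (LinearMap.snd ℤ _ _))
      ((LinearMap.fst ℤ _ _).comp (LinearMap.snd ℤ _ _))
  - (2 : ℤ) • ((LinearMap.mul ℤ ℤ).compl₁₂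
      ((LinearMap.fst ℤ _ _).comp ((LinearMap.snd ℤ _ _).comp (LinearMap.snd ℤ _ _)))
      ((LinearMap.fst ℤ _ _).comp ((LinearMap.snd ℤ _ _).comp (LinearMap.snd ℤ _ _))))
  - (2 : ℤ) • ((LinearMap.mul ℤ ℤ).compl₁₂
      ((LinearMap.snd ℤ _ _).comp ((LinearMap.snd ℤ _ _).comp (LinearMap.snd ℤ _ _)))
      ((LinearMap.snd ℤ _ _).comp ((LinearMap.snd ℤ _ _).comp (LinearMap.snd ℤ _ _))))

/-- The class `Σ = g₁ - g₂ ∈ Λ_N`, the difference of the generators of the two `⟨-2⟩`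
summands. -/
def SigmaN : LamN := (0, 0, 1, -1)

/-- The underlying group of the lattice `Λ_fix(2) = U(2)³ ⊕ E8(-2)(2) ⊕ ⟨-4⟩`. -/
abbrev TN : Type := (Fin 6 → ℤ) × (Fin 8 → ℤ) × ℤ

/-- The bilinear form of `Λ_fix(2) = U(2)³ ⊕ E8(-4) ⊕ ⟨-4⟩`. -/
noncomputable def bTN : LinearMap.BilinForm ℤ TN :=
  (2 : ℤ) • (bU3.compl₁₂ (LinearMap.fst ℤ _ _) (LinearMap.fst ℤ _ _))
  - (4 : ℤ) • (bE8.compl₁₂ ((LinearMap.fst ℤ _ _).comp (LinearMap.snd ℤ _ _))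
      ((LinearMap.fst ℤ _ _).comp (LinearMap.snd ℤ _ _)))
  - (4 : ℤ) • ((LinearMap.mul ℤ ℤ).compl₁₂
      ((LinearMap.snd ℤ _ _).comp (LinearMap.snd ℤ _ _))
      ((LinearMap.snd ℤ _ _).comp (LinearMap.snd ℤ _ _)))

/-- The embedding `Λ_fix(2) = U(2)³ ⊕ E8(-2)(2) ⊕ ⟨-4⟩ → Λ_N`,
`u ⊕ e ⊕ k ↦ u ⊕ 2e ⊕ k·g₁ ⊕ k·g₂`. -/
def embN : TN →ₗ[ℤ] LamN where
  toFun p := (p.1, (2 : ℤ) • p.2.1, p.2.2, p.2.2)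
  map_add' x y := by
    refine Prod.ext rfl (Prod.ext ?_ rfl)
    simp [smul_add]
  map_smul' c x := by
    refine Prod.ext rfl (Prod.ext ?_ rfl)
    funext i
    simp
    ring

private lemma cons_val_five' {α : Type*} {m : ℕ} (x : α) (u : Fin (m + 5) → α) :
    Matrix.vecCons x u 5 =
      Matrix.vecHead (Matrix.vecTail (Matrix.vecTail (Matrix.vecTail (Matrix.vecTail u)))) := rfl

private lemma cons_val_six' {α : Type*} {m : ℕ} (x : α) (u : Fin (m + 6) → α) :
    Matrix.vecCons x u 6 =
      Matrix.vecHead (Matrix.vecTail (Matrix.vecTail (Matrix.vecTail (Matrix.vecTail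
        (Matrix.vecTail u))))) := rfl

private lemma cons_val_seven' {α : Type*} {m : ℕ} (x : α) (u : Fin (m + 7) → α) :
    Matrix.vecCons x u 7 =
      Matrix.vecHead (Matrix.vecTail (Matrix.vecTail (Matrix.vecTail (Matrix.vecTail
        (Matrix.vecTail (Matrix.vecTail u)))))) := rfl

private lemma bLamN_eval (u : Fin 6 → ℤ) (e : Fin 8 → ℤ) (k1 k2 : ℤ)
    (w1 : Fin 6 → ℤ) (w2 : Fin 8 → ℤ) (w3 w4 : ℤ) :
    bLamN (u, e, k1, k2) (w1, w2, w3, w4)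
      = 2 * bU3 u w1 - bE8 e w2 - 2 * (k1 * w3) - 2 * (k2 * w4) := by
  simp [bLamN, smul_eq_mul]

set_option maxHeartbeats 4000000 in
private lemma bE8_even (e : Fin 8 → ℤ) (h : ∀ y, Even (bE8 e y)) : ∀ i, e i % 2 = 0 := by
  have H0 := h ![1,0,0,0,0,0,0,0]
  have H1 := h ![0,1,0,0,0,0,0,0]
  have H2 := h ![0,0,1,0,0,0,0,0]
  have H3 := h ![0,0,0,1,0,0,0,0]
  have H4 := h ![0,0,0,0,1,0,0,0]
  have H5 := h ![0,0,0,0,0,1,0,0]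
  have H6 := h ![0,0,0,0,0,0,1,0]
  have H7 := h ![0,0,0,0,0,0,0,1]
  simp [bE8, gramE8, Matrix.toBilin'_apply', Matrix.mulVec, dotProduct,
    Fin.sum_univ_eight, cons_val_five', cons_val_six', cons_val_seven',
    Matrix.vecHead, Matrix.vecTail, Int.even_iff] at H0 H1 H2 H3 H4 H5 H6 H7
  intro i
  fin_cases i
  · show e 0 % 2 = 0; omega
  · show e 1 % 2 = 0; omega
  · show e 2 % 2 = 0; omega
  · show e 3 % 2 = 0; omega
  · show e 4 % 2 = 0; omega
  · show e 5 % 2 = 0; omega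
  · show e 6 % 2 = 0; omega
  · show e 7 % 2 = 0; omega

set_option maxHeartbeats 1000000 in
/-- **Even-divisibility part of `Σ^⊥`.**  In `Λ_N = U(2)³ ⊕ E8(-1) ⊕ ⟨-2⟩²` with
`Σ = g₁ - g₂`, the set of elements of `Σ^⊥` of even divisibility (i.e. orthogonal to `Σ`
and with even pairing against every element of `Λ_N`) equals the image of the embedding
`U(2)³ ⊕ E8(-2)(2) ⊕ ⟨-4⟩ → Λ_N`, `u ⊕ e ⊕ k ↦ u ⊕ 2e ⊕ k·g₁ ⊕ k·g₂`.  (Equivalently, an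
element `u ⊕ e ⊕ k·g₁ ⊕ k·g₂ ∈ Σ^⊥` has even divisibility iff `e ∈ 2E8(-1)`.) -/
theorem even_divisibility_in_Sigma_perp :
    {v : LamN | bLamN v SigmaN = 0 ∧ ∀ w : LamN, Even (bLamN v w)}
      = Set.range embN := by
  ext v
  simp only [Set.mem_setOf_eq, Set.mem_range]
  constructor
  · intro h
    obtain ⟨u, e, k1, k2⟩ := v
    obtain ⟨h1, h2⟩ := h
    rw [show (SigmaN : LamN) = ((0 : Fin 6 → ℤ), (0 : Fin 8 → ℤ), (1 : ℤ), (-1 : ℤ)) from rfl,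
      bLamN_eval] at h1
    simp only [map_zero, mul_one, mul_neg_one] at h1
    have hk : k1 = k2 := by omega
    have he : ∀ i, e i % 2 = 0 := by
      refine bE8_even e fun y => ?_
      have H := h2 (0, y, 0, 0)
      rw [bLamN_eval] at H
      simp only [map_zero, mul_zero, sub_zero, zero_sub] at H
      simpa using H.neg
    refine ⟨(u, fun i => e i / 2, k1), ?_⟩
    show ((u, (2 : ℤ) • (fun i => e i / 2), k1, k1) : LamN) = (u, e, k1, k2)
    refine Prod.ext rfl (Prod.ext ?_ (Prod.ext rfl hk))
    funext i
    have := he i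
    simp only [Pi.smul_apply, smul_eq_mul]
    omega
  · rintro ⟨⟨u', e', k⟩, rfl⟩
    have hemb : (embN (u', e', k) : LamN) = (u', (2 : ℤ) • e', k, k) := rfl
    constructor
    · rw [hemb, show (SigmaN : LamN) = ((0 : Fin 6 → ℤ), (0 : Fin 8 → ℤ), (1 : ℤ), (-1 : ℤ)) from rfl,
        bLamN_eval]
      simp
    · intro w
      obtain ⟨w1, w2, w3, w4⟩ := w
      rw [hemb, bLamN_eval, map_smul]
      exact ⟨bU3 u' w1 - bE8 e' w2 - k * w3 - k * w4, by simp [smul_eq_mul]; ring⟩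
end
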